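/- For positive integers m, n ≥ 2, the cycle hull number of the grid graph P_m □ P_n equals m + n − 1. -/

import Mathlib

open SimpleGraph

variable {V α β : Type*}

/-- A set `S` is cycle convex in `G` if no vertex outside `S` lies on a cycle in the
subgraph induced by `S ∪ {w}`. -/
def CycleConvex (G : SimpleGraph V) (S : Set V) : Prop :=
  ∀ w : V, w ∉ S →
    ∀ c : (G.induce (insert w S)).Walk ⟨w, Set.mem_insert w S⟩ ⟨w, Set.mem_insert w S⟩,
      ¬ c.IsCycle

/-- The cycle convex hull of `S`: the smallest cycle convex set containing `S`. -/
def cycleHull (G : SimpleGraph V) (S : Set V) : Set V :=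
  ⋂₀ {T : Set V | S ⊆ T ∧ CycleConvex G T}

/-- The cycle hull number: minimum size of a set whose cycle convex hull is everything. -/
noncomputable def cycleHullNumber (G : SimpleGraph V) : ℕ :=
  sInf {n : ℕ | ∃ S : Set V, S.ncard = n ∧ cycleHull G S = Set.univ}

/-- The cycle convexity number: maximum size of a proper cycle convex set. -/
noncomputable def cycleConvexityNumber (G : SimpleGraph V) : ℕ :=
  sSup {n : ℕ | ∃ S : Set V, S.ncard = n ∧ CycleConvex G S ∧ S ≠ Set.univ}

/-- The independence number of a graph. -/
noncomputable def indepNumber (G : SimpleGraph V) : ℕ :=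
  sSup {n : ℕ | ∃ S : Set V, S.ncard = n ∧ S.Pairwise fun a b => ¬ G.Adj a b}

/-- The strong product of two simple graphs. -/
def strongProd (G : SimpleGraph α) (H : SimpleGraph β) : SimpleGraph (α × β) where
  Adj x y := (G.Adj x.1 y.1 ∧ x.2 = y.2) ∨ (x.1 = y.1 ∧ H.Adj x.2 y.2) ∨
    (G.Adj x.1 y.1 ∧ H.Adj x.2 y.2)
  symm := ⟨fun x y h => by
    rcases h with ⟨h1, h2⟩ | ⟨h1, h2⟩ | ⟨h1, h2⟩
    · exact Or.inl ⟨h1.symm, h2.symm⟩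
    · exact Or.inr (Or.inl ⟨h1.symm, h2.symm⟩)
    · exact Or.inr (Or.inr ⟨h1.symm, h2.symm⟩)⟩
  loopless := ⟨fun x h => by
    rcases h with ⟨h1, _⟩ | ⟨_, h2⟩ | ⟨h1, _⟩
    · exact G.loopless.irrefl _ h1
    · exact H.loopless.irrefl _ h2
    · exact G.loopless.irrefl _ h1⟩

/-- The lexicographic product of two simple graphs. -/
def lexProd (G : SimpleGraph α) (H : SimpleGraph β) : SimpleGraph (α × β) where
  Adj x y := G.Adj x.1 y.1 ∨ (x.1 = y.1 ∧ H.Adj x.2 y.2)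
  symm := ⟨fun x y h => by
    rcases h with h1 | ⟨h1, h2⟩
    · exact Or.inl h1.symm
    · exact Or.inr ⟨h1.symm, h2.symm⟩⟩
  loopless := ⟨fun x h => by
    rcases h with h1 | ⟨_, h2⟩
    · exact G.loopless.irrefl _ h1
    · exact H.loopless.irrefl _ h2⟩

/-!
A cell set `S` of the grid determines a bipartite graph on rows and columns, with an edge
between row `a` and column `b` for every cell `(a, b) ∈ S`. The cells whose row and column are
joined in this graph form a cycle convex set: a walk between two distinct grid neighbours of a
cell `w` meets both the row and the column of `w`, and consecutive cells of a walk inside the set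
share a row or a column, hence a component. So if the hull of `S` is the whole grid, this graph
on `m + n` vertices is connected and `S`, its edge set, has at least `m + n - 1` elements.
Conversely the first row and column generate the grid: every other cell closes a 4-cycle with
three cells that precede it.
-/

section General

variable {G : SimpleGraph V}

lemma cycleHull_subset {S T : Set V} (hT : CycleConvex G T) (hST : S ⊆ T) :
    cycleHull G S ⊆ T :=
  Set.sInter_subset_of_mem ⟨hST, hT⟩

lemma exists_walk_of_isCycle_induce_insert {S : Set V} {w : V}
    {c : (G.induce (insert w S)).Walk ⟨w, Set.mem_insert w S⟩ ⟨w, Set.mem_insert w S⟩}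
    (hc : c.IsCycle) :
    ∃ u v, u ≠ v ∧ G.Adj w u ∧ G.Adj w v ∧ ∃ p : G.Walk u v, ∀ z ∈ p.support, z ∈ S := by
  cases c with
  | nil => exact absurd rfl hc.ne_nil
  | @cons _ u _ hwu p =>
    obtain ⟨hp, hwup⟩ := (Walk.cons_isCycle_iff p hwu).1 hc
    obtain ⟨v, hwv, q, hpq⟩ := Walk.exists_eq_cons_of_ne hwu.ne p.reverse
    have hq : (Walk.cons hwv q).IsPath := hpq ▸ hp.reverse
    rw [Walk.cons_isPath_iff] at hq
    have huv : u ≠ v := by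
      rintro rfl
      apply hwup
      rw [← List.mem_reverse, ← Walk.edges_reverse, hpq]
      simp [Sym2.eq_swap]
    let p' : G.Walk u v := q.reverse.map (Embedding.induce _).toHom
    have hp' : p'.support = q.support.reverse.map Subtype.val := by
      rw [← Walk.support_reverse]; exact Walk.support_map _ _
    refine ⟨u, v, Subtype.coe_injective.ne huv, hwu, hwv, p', ?_⟩
    simp only [hp', List.mem_map, List.mem_reverse]
    rintro _ ⟨z, hz, rfl⟩
    exact z.2.resolve_left fun h => hq.2 ((Subtype.ext h : z = ⟨w, _⟩) ▸ hz)

lemma CycleConvex.mem_of_square {T : Set V} (hT : CycleConvex G T) {w x y z : V}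
    (hx : x ∈ T) (hy : y ∈ T) (hz : z ∈ T) (hwx : G.Adj w x) (hxy : G.Adj x y)
    (hyz : G.Adj y z) (hzw : G.Adj z w) (hwy : w ≠ y) (hxz : x ≠ z) : w ∈ T := by
  by_contra hw
  have adj {a b : ↥(insert w T)} (h : G.Adj a b) : (G.induce (insert w T)).Adj a b := h
  refine hT w hw (.cons (v := ⟨x, .inr hx⟩) (adj hwx) <| .cons (v := ⟨y, .inr hy⟩) (adj hxy) <|
    .cons (v := ⟨z, .inr hz⟩) (adj hyz) <| .cons (adj hzw) .nil) ?_
  simp [Walk.cons_isCycle_iff, Walk.cons_isPath_iff, Subtype.ext_iff, hwx.ne, hxy.ne, hyz.ne,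
    hzw.ne, hwy, hxz, hwx.ne.symm, hwy.symm]

lemma SimpleGraph.Walk.exists_mem_support_eq {f : V → ℕ}
    (hf : ∀ x y, G.Adj x y → f y ≤ f x + 1) {x y : V} (p : G.Walk x y) {k : ℕ}
    (hx : f x ≤ k) (hy : k ≤ f y) : ∃ z ∈ p.support, f z = k := by
  induction p with
  | nil => exact ⟨_, Walk.start_mem_support _, by omega⟩
  | @cons x x' y h q ih =>
    by_cases hk : f x = k
    · exact ⟨x, by simp, hk⟩
    · obtain ⟨z, hz, hzk⟩ := ih (by have := hf x x' h; omega) hy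
      exact ⟨z, by simp [hz], hzk⟩

end General

section RowColumnGraph

open Sum

def rowColumnGraph (S : Set (α × β)) : SimpleGraph (α ⊕ β) :=
  fromEdgeSet ((fun p => s(inl p.1, inr p.2)) '' S)

def connectedCells (S : Set (α × β)) : Set (α × β) :=
  {p | (rowColumnGraph S).Reachable (inl p.1) (inr p.2)}

variable {S : Set (α × β)}

lemma rowColumnGraph_adj_of_mem {a : α} {b : β} (h : (a, b) ∈ S) :
    (rowColumnGraph S).Adj (inl a) (inr b) :=
  (fromEdgeSet_adj _).2 ⟨⟨(a, b), h, rfl⟩, inl_ne_inr⟩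

lemma card_edgeSet_rowColumnGraph_le (hS : S.Finite) :
    Nat.card (rowColumnGraph S).edgeSet ≤ S.ncard := by
  rw [Nat.card_coe_set_eq]
  calc (rowColumnGraph S).edgeSet.ncard ≤ ((fun p => s(inl p.1, inr p.2)) '' S).ncard :=
        Set.ncard_le_ncard (by rw [rowColumnGraph, edgeSet_fromEdgeSet]; exact Set.sdiff_subset)
          (hS.image _)
    _ ≤ S.ncard := Set.ncard_image_le hS

lemma subset_connectedCells : S ⊆ connectedCells S :=
  fun _ h => (rowColumnGraph_adj_of_mem h).reachable

lemma connected_rowColumnGraph [Nonempty α] [Nonempty β] (h : connectedCells S = Set.univ) :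
    (rowColumnGraph S).Connected := by
  have hcell (a : α) (b : β) : (rowColumnGraph S).Reachable (inl a) (inr b) :=
    (h ▸ Set.mem_univ (a, b) : (a, b) ∈ connectedCells S)
  obtain ⟨a₀⟩ := ‹Nonempty α›
  obtain ⟨b₀⟩ := ‹Nonempty β›
  refine (connected_iff_exists_forall_reachable _).2 ⟨inl a₀, ?_⟩
  rintro (a | b)
  · exact (hcell a₀ b₀).trans (hcell a b₀).symm
  · exact hcell a₀ b

lemma reachable_inl_of_adj {G : SimpleGraph α} {H : SimpleGraph β} {x y : α × β}
    (hx : x ∈ connectedCells S) (hy : y ∈ connectedCells S) (h : (G □ H).Adj x y) :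
    (rowColumnGraph S).Reachable (inl x.1) (inl y.1) := by
  rcases boxProd_adj.1 h with ⟨-, h2⟩ | ⟨-, h1⟩
  · exact hx.trans (h2 ▸ hy.symm)
  · rw [h1]

lemma reachable_inl_of_mem_support {G : SimpleGraph α} {H : SimpleGraph β} {x y : α × β}
    (p : (G □ H).Walk x y) (hp : ∀ z ∈ p.support, z ∈ connectedCells S) :
    ∀ z ∈ p.support, (rowColumnGraph S).Reachable (inl x.1) (inl z.1) := by
  induction p with
  | nil => simp
  | @cons x x' y h q ih =>
    simp only [Walk.support_cons, List.mem_cons, forall_eq_or_imp] at hp ⊢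
    exact ⟨.refl _, fun z hz => (reachable_inl_of_adj hp.1 (hp.2 _ q.start_mem_support) h).trans
      (ih hp.2 z hz)⟩

end RowColumnGraph

section Grid

variable {m n : ℕ}

lemma exists_mem_support_fst_eq {H : SimpleGraph β} {u v w : Fin m × β}
    (p : (pathGraph m □ H).Walk u v) (hu : (pathGraph m □ H).Adj w u)
    (hv : (pathGraph m □ H).Adj w v) (huv : u ≠ v) : ∃ z ∈ p.support, z.1 = w.1 := by
  rcases boxProd_adj.1 hu with ⟨hu1, hu2⟩ | ⟨-, hu1⟩
  swap; · exact ⟨u, p.start_mem_support, hu1.symm⟩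
  rcases boxProd_adj.1 hv with ⟨hv1, hv2⟩ | ⟨-, hv1⟩
  swap; · exact ⟨v, p.end_mem_support, hv1.symm⟩
  -- `u` and `v` lie on either side of `w` in its column, so `p` has to cross the row of `w`.
  have hne : (u.1 : ℕ) ≠ v.1 := fun h => huv (Prod.ext (Fin.ext h) (hu2.symm.trans hv2))
  rw [pathGraph_adj] at hu1 hv1
  have hrow (x y : Fin m × β) (h : (pathGraph m □ H).Adj x y) : (y.1 : ℕ) ≤ x.1 + 1 := by
    rcases boxProd_adj.1 h with ⟨h1, -⟩ | ⟨-, h1⟩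
    · rw [pathGraph_adj] at h1; omega
    · rw [h1]; omega
  obtain ⟨z, hz, hzw⟩ : ∃ z ∈ p.support, (z.1 : ℕ) = w.1 := by
    rcases Nat.lt_or_gt_of_ne hne with h | h
    · exact p.exists_mem_support_eq (f := fun z => (z.1 : ℕ)) (k := w.1) hrow
        (by omega) (by omega)
    · obtain ⟨z, hz, hzw⟩ := p.reverse.exists_mem_support_eq (f := fun z => (z.1 : ℕ))
        (k := w.1) hrow (by omega) (by omega)
      exact ⟨z, by simpa using hz, hzw⟩
  exact ⟨z, hz, Fin.ext hzw⟩

lemma exists_mem_support_snd_eq {G : SimpleGraph α} {u v w : α × Fin n}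
    (p : (G □ pathGraph n).Walk u v) (hu : (G □ pathGraph n).Adj w u)
    (hv : (G □ pathGraph n).Adj w v) (huv : u ≠ v) : ∃ z ∈ p.support, z.2 = w.2 := by
  obtain ⟨z, hz, hzw⟩ := exists_mem_support_fst_eq (p.map (boxProdComm _ _).toHom) (w := w.swap)
    ((boxProdComm _ _).map_adj_iff.2 hu) ((boxProdComm _ _).map_adj_iff.2 hv)
    (Prod.swap_injective.ne huv)
  rw [Walk.support_map, List.mem_map] at hz
  obtain ⟨z, hz, rfl⟩ := hz
  exact ⟨z, hz, hzw⟩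

lemma cycleConvex_connectedCells (S : Set (Fin m × Fin n)) :
    CycleConvex (pathGraph m □ pathGraph n) (connectedCells S) := by
  intro w hw c hc
  obtain ⟨u, v, huv, hu, hv, p, hp⟩ := exists_walk_of_isCycle_induce_insert hc
  obtain ⟨z₁, hz₁, hz₁w⟩ := exists_mem_support_fst_eq p hu hv huv
  obtain ⟨z₂, hz₂, hz₂w⟩ := exists_mem_support_snd_eq p hu hv huv
  have hreach := reachable_inl_of_mem_support p hp
  apply hw
  change (rowColumnGraph S).Reachable _ _
  rw [← hz₁w, ← hz₂w]
  exact (hreach z₁ hz₁).symm.trans ((hreach z₂ hz₂).trans (hp z₂ hz₂))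

lemma add_le_ncard_add_one_of_cycleHull_eq_univ (hm : 0 < m) (hn : 0 < n)
    {S : Set (Fin m × Fin n)} (hS : cycleHull (pathGraph m □ pathGraph n) S = Set.univ) :
    m + n ≤ S.ncard + 1 := by
  have : Nonempty (Fin m) := Fin.pos_iff_nonempty.1 hm
  have : Nonempty (Fin n) := Fin.pos_iff_nonempty.1 hn
  have hcells : connectedCells S = Set.univ := Set.univ_subset_iff.1 <|
    hS ▸ cycleHull_subset (cycleConvex_connectedCells S) subset_connectedCells
  have := (connected_rowColumnGraph hcells).card_vert_le_card_edgeSet_add_one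
  simp only [Nat.card_eq_fintype_card, Fintype.card_sum, Fintype.card_fin] at this
  have := card_edgeSet_rowColumnGraph_le S.toFinite
  omega

def axesCells (m n : ℕ) : Set (Fin m × Fin n) :=
  {p | (p.1 : ℕ) = 0 ∨ (p.2 : ℕ) = 0}

lemma ncard_axesCells (hm : 0 < m) (hn : 0 < n) : (axesCells m n).ncard = m + n - 1 := by
  classical
  let row : Finset (Fin m × Fin n) := Finset.univ ×ˢ {⟨0, hn⟩}
  let col : Finset (Fin m × Fin n) := {⟨0, hm⟩} ×ˢ Finset.univ
  have hunion : axesCells m n = ↑(row ∪ col) := by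
    ext p
    simp only [axesCells, row, col, Set.mem_ofPred_eq, Finset.coe_union, Set.mem_union,
      Finset.mem_coe, Finset.mem_product, Finset.mem_univ, Finset.mem_singleton, Fin.ext_iff,
      true_and, and_true]
    exact or_comm
  have hinter : row ∩ col = {(⟨0, hm⟩, ⟨0, hn⟩)} := by
    ext p
    simp only [row, col, Finset.mem_inter, Finset.mem_product, Finset.mem_univ,
      Finset.mem_singleton, Prod.ext_iff, true_and, and_true]
    exact and_comm
  have hrow : row.card = m := by simp [row]
  have hcol : col.card = n := by simp [col]
  have := Finset.card_union_add_card_inter row col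
  rw [hinter, hrow, hcol, Finset.card_singleton] at this
  rw [hunion, Set.ncard_coe_finset]
  omega

lemma cycleHull_axesCells :
    cycleHull (pathGraph m □ pathGraph n) (axesCells m n) = Set.univ := by
  refine Set.sInter_eq_univ.2 fun T ⟨hsub, hT⟩ => Set.eq_univ_of_forall ?_
  suffices h : ∀ a b (ha : a < m) (hb : b < n), (⟨a, ha⟩, ⟨b, hb⟩) ∈ T from
    fun p => h _ _ p.1.2 p.2.2
  intro a
  induction a with
  | zero => exact fun _ _ _ => hsub (Or.inl rfl)
  | succ a iha =>
    intro b
    induction b with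
    | zero => exact fun _ _ => hsub (Or.inr rfl)
    | succ b ihb =>
      intro ha hb
      exact hT.mem_of_square (iha (b + 1) (by omega) hb) (iha b (by omega) (by omega))
        (ihb ha (by omega)) (by simp [boxProd_adj, pathGraph_adj, Fin.ext_iff])
        (by simp [boxProd_adj, pathGraph_adj, Fin.ext_iff])
        (by simp [boxProd_adj, pathGraph_adj, Fin.ext_iff])
        (by simp [boxProd_adj, pathGraph_adj, Fin.ext_iff])
        (by simp [Prod.ext_iff, Fin.ext_iff]) (by simp [Prod.ext_iff, Fin.ext_iff])

end Grid

theorem stmt_11 (m n : ℕ) (hm : 2 ≤ m) (hn : 2 ≤ n) :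
    cycleHullNumber (pathGraph m □ pathGraph n) = m + n - 1 := by
  refine IsLeast.csInf_eq ⟨⟨axesCells m n, ncard_axesCells (by omega) (by omega),
    cycleHull_axesCells⟩, ?_⟩
  rintro k ⟨S, rfl, hS⟩
  have := add_le_ncard_add_one_of_cycleHull_eq_univ (by omega) (by omega) hS
  omega
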